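/- Let φ_k : ℝ² → A_{2k} be defined by φ_k(p,q) = (q^k cos(2πp/q), q^k sin(2πp/q), q) for q ≠ 0 and φ_k(p,0) = (0,0,0). Then φ_k(p,q) = φ_k(p',q') if and only if (p,q) ∼ (p',q'), where ∼ is the closed equivalence relation generated by the ℤ-action n·(p,q) = (p+nq,q); moreover φ_k is surjective onto A_{2k} = {(x,y,z) : x²+y² = z^{2k}}. -/

import Mathlib

open Real

/-
On each horizontal line `q ≠ 0`, `φ_k` winds the `p`-axis around the circle of radius `|q|^k`
at height `q` with period `|q|`, so two points of the line have the same image exactly when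
their `p`-coordinates differ by a multiple of `q`; the line `q = 0` collapses to the cone point.
Every point of a circle is `(r cos θ, r sin θ)` for some `θ`, which gives surjectivity.
-/

/-- The map `φ_k(p,q) = (q^k cos(2πp/q), q^k sin(2πp/q), q)` (sending the line
`q = 0` to the origin; note `p/0 = 0` in Lean, so the formula already extends
by `(0,0,0)`). -/
noncomputable def phiMap (k : ℕ) (v : ℝ × ℝ) : ℝ × ℝ × ℝ :=
  (v.2 ^ k * Real.cos (2 * π * v.1 / v.2),
   v.2 ^ k * Real.sin (2 * π * v.1 / v.2), v.2)

/-- The closed equivalence relation generated by the `ℤ`-action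
`n·(p,q) = (p+nq,q)`: either both points lie on `q = 0`, or they have the same
`q ≠ 0` and differ by an integer multiple of `q` in `p`. -/
def simRel (a b : ℝ × ℝ) : Prop :=
  (a.2 = 0 ∧ b.2 = 0) ∨ (a.2 = b.2 ∧ a.2 ≠ 0 ∧ ∃ n : ℤ, b.1 = a.1 + n * a.2)

theorem Real.exists_int_eq_add_mul_two_pi_of_cos_eq_of_sin_eq {θ ψ : ℝ}
    (hcos : cos θ = cos ψ) (hsin : sin θ = sin ψ) : ∃ n : ℤ, ψ = θ + n * (2 * π) := by
  obtain ⟨n, hn⟩ := Real.Angle.angle_eq_iff_two_pi_dvd_sub.mp (Real.Angle.cos_sin_inj hcos hsin)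
  exact ⟨-n, by push_cast; linarith⟩

theorem Real.exists_mul_cos_eq_and_mul_sin_eq {r x y : ℝ} (hr : r ≠ 0)
    (h : x ^ 2 + y ^ 2 = r ^ 2) : ∃ θ : ℝ, r * cos θ = x ∧ r * sin θ = y := by
  set c : ℂ := ⟨x / r, y / r⟩
  have hc : ‖c‖ = 1 := by
    rw [Complex.norm_def, Complex.normSq_mk,
      show x / r * (x / r) + y / r * (y / r) = (x ^ 2 + y ^ 2) / r ^ 2 by field_simp,
      h, div_self (pow_ne_zero 2 hr), Real.sqrt_one]
  have hc0 : c ≠ 0 := norm_ne_zero_iff.mp (hc ▸ one_ne_zero)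
  refine ⟨Complex.arg c, ?_, ?_⟩
  · rw [Complex.cos_arg hc0, hc, div_one]
    exact mul_div_cancel₀ x hr
  · rw [Complex.sin_arg, hc, div_one]
    exact mul_div_cancel₀ y hr

theorem phiMap_mk_zero (k : ℕ) (p : ℝ) : phiMap k (p, 0) = ((0 : ℝ) ^ k, 0, 0) := by
  simp [phiMap]

theorem phiMap_add_int_mul (k : ℕ) (p q : ℝ) (n : ℤ) :
    phiMap k (p + n * q, q) = phiMap k (p, q) := by
  rcases eq_or_ne q 0 with rfl | hq
  · simp
  have harg : 2 * π * (p + n * q) / q = 2 * π * p / q + n * (2 * π) := by field_simp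
  simp only [phiMap, harg, cos_add_int_mul_two_pi, sin_add_int_mul_two_pi]

theorem exists_eq_add_int_mul_of_phiMap_eq {k : ℕ} {p p' q : ℝ} (hq : q ≠ 0)
    (h : phiMap k (p, q) = phiMap k (p', q)) : ∃ n : ℤ, p' = p + n * q := by
  simp only [phiMap, Prod.mk.injEq, and_true] at h
  have hqk : q ^ k ≠ 0 := pow_ne_zero k hq
  obtain ⟨n, hn⟩ := Real.exists_int_eq_add_mul_two_pi_of_cos_eq_of_sin_eq
    (mul_left_cancel₀ hqk h.1) (mul_left_cancel₀ hqk h.2)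
  refine ⟨n, ?_⟩
  field_simp at hn
  nlinarith [pi_pos]

theorem phiMap_eq_iff_simRel (k : ℕ) (a b : ℝ × ℝ) : phiMap k a = phiMap k b ↔ simRel a b := by
  obtain ⟨p, q⟩ := a
  obtain ⟨p', q'⟩ := b
  constructor
  · intro h
    obtain rfl : q = q' := congrArg (·.2.2) h
    rcases eq_or_ne q 0 with hq | hq
    · exact Or.inl ⟨hq, hq⟩
    · exact Or.inr ⟨rfl, hq, exists_eq_add_int_mul_of_phiMap_eq hq h⟩
  · rintro (⟨rfl, rfl⟩ | ⟨rfl, -, n, rfl⟩)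
    · rw [phiMap_mk_zero, phiMap_mk_zero]
    · exact (phiMap_add_int_mul k p q n).symm

theorem exists_phiMap_eq {k : ℕ} (hk : k ≠ 0) {w : ℝ × ℝ × ℝ}
    (hw : w.1 ^ 2 + w.2.1 ^ 2 = w.2.2 ^ (2 * k)) : ∃ a : ℝ × ℝ, phiMap k a = w := by
  obtain ⟨x, y, z⟩ := w
  rw [pow_mul'] at hw
  rcases eq_or_ne z 0 with rfl | hz
  · refine ⟨(0, 0), ?_⟩
    rw [zero_pow hk, zero_pow two_ne_zero] at hw
    obtain ⟨rfl, rfl⟩ : x = 0 ∧ y = 0 := by constructor <;> nlinarith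
    simp [phiMap_mk_zero, zero_pow hk]
  obtain ⟨θ, hx, hy⟩ := Real.exists_mul_cos_eq_and_mul_sin_eq (pow_ne_zero k hz) hw
  refine ⟨(θ * z / (2 * π), z), ?_⟩
  have harg : 2 * π * (θ * z / (2 * π)) / z = θ := by field_simp
  simp only [phiMap, harg, hx, hy]

theorem stmt10 (k : ℕ) (hk : 2 ≤ k) :
    (∀ a b : ℝ × ℝ, phiMap k a = phiMap k b ↔ simRel a b) ∧
    (∀ w : ℝ × ℝ × ℝ, w.1 ^ 2 + w.2.1 ^ 2 = w.2.2 ^ (2 * k) →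
      ∃ a : ℝ × ℝ, phiMap k a = w) :=
  ⟨phiMap_eq_iff_simRel k, fun _ => exists_phiMap_eq (by omega)⟩
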